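/- (Uniform asymptotics of the martingale bracket, Proposition 2.1(b).) Fix a real j > 0 and for ε > 0 set q_ε := e^{−√ε}. Then lim_{ε→0⁺} sup_{a,b ∈ [−j,j]} | ε⁻¹·( (q_ε² − 1)²·c⁺_{q_ε}(a,b) + (q_ε⁻² − 1)²·c⁻_{q_ε}(a,b) ) − 2(j² − ab)/j | = 0. -/

import Mathlib

/-- The `q`-number `[n]_q = (q^n - q^(-n))/(q - q⁻¹)` for real `n`. -/
noncomputable def qNum (q n : ℝ) : ℝ := (q ^ n - q ^ (-n)) / (q - q⁻¹)

/-- ASEP(q,j) jump rate from `x` to `x+1`. -/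
noncomputable def cPlus (q j a b : ℝ) : ℝ :=
  (1 / (2 * qNum q (2*j))) * q ^ (a - b - (2*j + 1)) * qNum q (j + a) * qNum q (j - b)

/-- ASEP(q,j) jump rate from `x+1` to `x`. -/
noncomputable def cMinus (q j a b : ℝ) : ℝ :=
  (1 / (2 * qNum q (2*j))) * q ^ (a - b + (2*j + 1)) * qNum q (j - a) * qNum q (j + b)

/-- The weakly asymmetric scaling `q_ε = e^{−√ε}`. -/
noncomputable def qe (ε : ℝ) : ℝ := Real.exp (-Real.sqrt ε)

/-!
With `t = √ε` and `q = e^{-t}`, the `q`-numbers become `[n]_q = sinh (t n) / sinh t`, and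
`ε⁻¹ · bracket` becomes an explicit expression in `t, a, b` built from `exp` and
`sinhc u = sinh u / u`. That expression is jointly continuous, including at `t = 0`, where it equals
`2 (j² − ab) / j`; uniform continuity on a compact neighbourhood of `{0} × [-j, j]²` makes the
convergence as `t → 0` uniform in `(a, b)`.
-/

open Real Filter Topology Set

theorem Continuous.tendstoUniformlyOn_of_isCompact {α β γ : Type*} [UniformSpace α]
    [WeaklyLocallyCompactSpace α] [UniformSpace β] [UniformSpace γ] {F : α → β → γ}
    (hF : Continuous ↿F) {s : Set β} (hs : IsCompact s) (x : α) :
    TendstoUniformlyOn F (F x) (𝓝 x) s := by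
  obtain ⟨K, hK, hxK⟩ := exists_compact_mem_nhds x
  have := (hK.prod hs).uniformContinuousOn_of_continuous hF.continuousOn
  simpa [nhdsWithin_eq_nhds.2 hxK] using this.tendstoUniformlyOn (mem_of_mem_nhds hxK)

theorem TendstoUniformlyOn.comp_tendsto {ι ι' α β : Type*} [UniformSpace β] {F : ι → α → β}
    {f : α → β} {p : Filter ι} {p' : Filter ι'} {s : Set α} {g : ι' → ι}
    (h : TendstoUniformlyOn F f p s) (hg : Tendsto g p' p) :
    TendstoUniformlyOn (fun n => F (g n)) f p' s :=
  fun u hu => hg.eventually (h u hu)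

lemma tendsto_sSup_abs_sub_of_tendstoUniformlyOn {ι α : Type*} {F : ι → α → ℝ} {f : α → ℝ}
    {p : Filter ι} {s : Set α} (h : TendstoUniformlyOn F f p s) :
    Tendsto (fun n => sSup ((fun x => |F n x - f x|) '' s)) p (𝓝 0) := by
  rw [Metric.tendsto_nhds]
  intro η hη
  filter_upwards [Metric.tendstoUniformlyOn_iff.1 h (η / 2) (half_pos hη)] with n hn
  have hbound : ∀ v ∈ (fun x => |F n x - f x|) '' s, 0 ≤ v ∧ v ≤ η / 2 := by
    rintro _ ⟨x, hx, rfl⟩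
    exact ⟨abs_nonneg _, by dsimp only; rw [← Real.dist_eq, dist_comm]; exact (hn x hx).le⟩
  rw [Real.dist_eq, sub_zero, abs_of_nonneg (Real.sSup_nonneg fun v hv => (hbound v hv).1)]
  exact (Real.sSup_le (fun v hv => (hbound v hv).2) (half_pos hη).le).trans_lt (half_lt_self hη)

noncomputable def sinhc (x : ℝ) : ℝ := if x = 0 then 1 else sinh x / x

lemma sinhc_eq_dslope : sinhc = dslope sinh 0 := by
  ext
  simp [dslope, Function.update_apply, sinhc, slope, div_eq_inv_mul]

@[fun_prop]
lemma continuous_sinhc : Continuous sinhc := by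
  refine continuous_iff_continuousAt.mpr fun x ↦ ?_
  rw [sinhc_eq_dslope]
  by_cases hx : x = 0
  · simp [hx]
  · rw [continuousAt_dslope_of_ne hx]
    fun_prop

lemma mul_sinhc (x : ℝ) : x * sinhc x = sinh x := by
  by_cases hx : x = 0
  · simp [sinhc, hx]
  · rw [sinhc, if_neg hx, mul_div_cancel₀ _ hx]

lemma sinhc_ne_zero (x : ℝ) : sinhc x ≠ 0 := by
  intro h
  by_cases hx : x = 0
  · simp [sinhc, hx] at h
  · have := mul_sinhc x
    rw [h, mul_zero, eq_comm, sinh_eq_zero] at this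
    exact hx this

lemma qNum_exp_neg (t n : ℝ) : qNum (exp (-t)) n = sinh (t * n) / sinh t := by
  have num : exp (-t) ^ n - exp (-t) ^ (-n) = -(2 * sinh (t * n)) := by
    rw [← exp_mul, ← exp_mul, sinh_eq]; ring_nf
  have den : exp (-t) - (exp (-t))⁻¹ = -(2 * sinh t) := by
    rw [← exp_neg, neg_neg, sinh_eq]; ring
  rw [qNum, num, den, neg_div_neg_eq, mul_div_mul_left _ _ two_ne_zero]

lemma sq_exp_two_mul_sub_one (x : ℝ) :
    (exp (2 * x) - 1) ^ 2 = 4 * exp (2 * x) * sinh x ^ 2 := by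
  rw [sinh_eq, exp_neg, show 2 * x = x + x by ring, exp_add]
  field_simp
  ring

noncomputable def martingaleBracket (q j a b : ℝ) : ℝ :=
  (q ^ (2:ℝ) - 1) ^ 2 * cPlus q j a b + (q ^ (-2:ℝ) - 1) ^ 2 * cMinus q j a b

/-- `t⁻² · martingaleBracket (e^{-t}) j a b` for `t ≠ 0`, with every `sinh u` written as
`u · sinhc u`; in this form it extends continuously to `t = 0`. -/
noncomputable def scaledBracket (j t a b : ℝ) : ℝ :=
  sinhc t / (j * sinhc (t * (2 * j))) *
    (exp (-(t * (a - b - 2 * j + 1))) *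
        ((j + a) * (j - b) * sinhc (t * (j + a)) * sinhc (t * (j - b))) +
      exp (-(t * (a - b + 2 * j - 1))) *
        ((j - a) * (j + b) * sinhc (t * (j - a)) * sinhc (t * (j + b))))

lemma martingaleBracket_exp_neg {t j : ℝ} (ht : t ≠ 0) (hj : j ≠ 0) (a b : ℝ) :
    (t ^ 2)⁻¹ * martingaleBracket (exp (-t)) j a b = scaledBracket j t a b := by
  simp only [martingaleBracket, cPlus, cMinus, qNum_exp_neg, ← exp_mul]
  rw [show -t * 2 = 2 * -t by ring, show -t * -2 = 2 * t by ring, sq_exp_two_mul_sub_one,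
    sq_exp_two_mul_sub_one, sinh_neg, neg_sq]
  simp only [← mul_sinhc]
  have hplus : exp (-(t * (a - b - 2 * j + 1))) =
      exp (2 * -t) * exp (-t * (a - b - (2 * j + 1))) := by
    rw [← exp_add]; ring_nf
  have hminus : exp (-(t * (a - b + 2 * j - 1))) =
      exp (2 * t) * exp (-t * (a - b + (2 * j + 1))) := by
    rw [← exp_add]; ring_nf
  have := sinhc_ne_zero t
  have := sinhc_ne_zero (t * (2 * j))
  rw [scaledBracket, hplus, hminus]
  field_simp
  ring

lemma continuous_scaledBracket {j : ℝ} (hj : j ≠ 0) :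
    Continuous fun p : ℝ × ℝ × ℝ => scaledBracket j p.1 p.2.1 p.2.2 := by
  unfold scaledBracket
  refine Continuous.mul ?_ (by fun_prop)
  exact continuous_sinhc.comp continuous_fst |>.div (by fun_prop)
    fun p => mul_ne_zero hj (sinhc_ne_zero _)

lemma scaledBracket_zero {j : ℝ} (hj : j ≠ 0) (a b : ℝ) :
    scaledBracket j 0 a b = 2 * (j ^ 2 - a * b) / j := by
  simp only [scaledBracket, zero_mul, neg_zero, exp_zero, sinhc, if_pos]
  field_simp
  ring

theorem stmt4 (j : ℝ) (hj : 0 < j) :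
    Filter.Tendsto
      (fun ε : ℝ => sSup { v : ℝ | ∃ a ∈ Set.Icc (-j) j, ∃ b ∈ Set.Icc (-j) j,
        v = |ε⁻¹ * ((qe ε ^ (2:ℝ) - 1)^2 * cPlus (qe ε) j a b
              + (qe ε ^ (-2:ℝ) - 1)^2 * cMinus (qe ε) j a b)
            - 2 * (j^2 - a*b) / j| })
      (nhdsWithin 0 (Set.Ioi 0)) (nhds 0) := by
  set K := Icc (-j) j ×ˢ Icc (-j) j
  have hK : IsCompact K := isCompact_Icc.prod isCompact_Icc
  have hlim := (continuous_scaledBracket hj.ne').tendstoUniformlyOn_of_isCompact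
    (F := fun t (x : ℝ × ℝ) => scaledBracket j t x.1 x.2) hK 0
  have hsqrt : Tendsto sqrt (𝓝[>] 0) (𝓝 0) :=
    (continuous_sqrt.tendsto' 0 0 sqrt_zero).mono_left nhdsWithin_le_nhds
  have hunif :
      TendstoUniformlyOn (fun ε (x : ℝ × ℝ) => ε⁻¹ * martingaleBracket (qe ε) j x.1 x.2)
      (fun x => 2 * (j ^ 2 - x.1 * x.2) / j) (𝓝[>] 0) K := by
    refine (hlim.comp_tendsto hsqrt).congr ?_
      |>.congr_right fun x _ => scaledBracket_zero hj.ne' x.1 x.2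
    filter_upwards [self_mem_nhdsWithin] with ε (hε : 0 < ε) x _
    dsimp only
    rw [← martingaleBracket_exp_neg (sqrt_pos.2 hε).ne' hj.ne', sq_sqrt hε.le]
    rfl
  convert tendsto_sSup_abs_sub_of_tendstoUniformlyOn hunif using 3 with ε
  ext v
  constructor
  · rintro ⟨a, ha, b, hb, rfl⟩
    exact ⟨(a, b), ⟨ha, hb⟩, rfl⟩
  · rintro ⟨⟨a, b⟩, ⟨ha, hb⟩, rfl⟩
    exact ⟨a, ha, b, hb, rfl⟩
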